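/- arXiv:2603.02159 — 2 statements merged into one kernel-verified Lean document; each statement's English description precedes it below -/
import Mathlib

section
/- Let (Ω, 𝔉, P) be a probability space, X a measurable space, and (f_x)_{x∈X} a centered Gaussian process on Ω with covariance function k(x, x′) = E[f_x·f_{x′}], such that each f_x ∈ L²(Ω, P) and x ↦ f_x ∈ L²(Ω, P) is strongly measurable. Let Z be an index set and (ν_z)_{z∈Z} a family of finite measures on X such that for each z the map x ↦ f_x is Bochner integrable in L²(Ω, P) with respect to ν_z, and set g_z = ∫ f_x dν_z(x) (Bochner integral in L²(Ω, P)). Then the combined process indexed by the disjoint union X ⊔ Z, equal to f_x on X and g_z on Z, is a centered Gaussian process, and its cross-covariance satisfies E[f_x·g_z] = ∫ k(x, x′) dν_z(x′) for all x ∈ X and z ∈ Z. -/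
/-!
Every `g z` lies in the closed linear span of the `f x` in `L²(P)`, because a Bochner integral
of a function with values in a closed subspace stays in that subspace. Centered Gaussian laws are
stable under `L²` limits: `L²` convergence gives convergence in distribution, the variances are
the squared norms and so converge, and `N(0, vₙ) → N(0, v)` weakly when `vₙ → v`. Hence every
finite linear combination of the `f x` and `g z` is centered Gaussian. The covariance formula is
`⟪f x, ∫ f dν z⟫ = ∫ ⟪f x, f x'⟫ dν z`, i.e. the integral commutes with the inner product.
-/

open MeasureTheory ProbabilityTheory

/-- A process `(f_t)_{t ∈ T}` on a measure space `(Ω, P)` is a centered Gaussian process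
if every finite real linear combination `∑ i, c i * f (t i)` is a centered real Gaussian
random variable. -/
def IsCenteredGaussianProcess {Ω T : Type*} [MeasurableSpace Ω]
    (P : Measure Ω) (f : T → Ω → ℝ) : Prop :=
  ∀ (n : ℕ) (t : Fin n → T) (c : Fin n → ℝ), ∃ v : NNReal,
    P.map (fun ω => ∑ i, c i * f (t i) ω) = gaussianReal 0 v

open Filter Topology
open scoped NNReal

lemma ProbabilityTheory.integral_sq_gaussianReal_zero (v : ℝ≥0) :
    ∫ x, x ^ 2 ∂gaussianReal 0 v = v := by
  rw [← variance_of_integral_eq_zero aemeasurable_id' integral_id_gaussianReal,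
    variance_fun_id_gaussianReal]

lemma ProbabilityTheory.gaussianReal_zero_eq_map_mul (v : ℝ≥0) :
    gaussianReal 0 v = (gaussianReal 0 1).map (fun x => √v * x) := by
  rw [gaussianReal_map_const_mul, mul_zero, mul_one]
  congr
  ext
  simp

lemma ProbabilityTheory.tendsto_gaussianReal_zero {ι : Type*} {l : Filter ι}
    [l.IsCountablyGenerated] {v : ι → ℝ≥0} {V : ℝ≥0} (hv : Tendsto v l (𝓝 V)) :
    Tendsto (β := ProbabilityMeasure ℝ) (fun i => ⟨gaussianReal 0 (v i), inferInstance⟩) l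
      (𝓝 ⟨gaussianReal 0 V, inferInstance⟩) := by
  have hsqrt : Tendsto (fun i => √(v i : ℝ)) l (𝓝 √(V : ℝ)) :=
    (NNReal.tendsto_coe.mpr hv).sqrt
  have h := (tendstoInDistribution_of_ae_tendsto (μ' := gaussianReal 0 1)
    (X := fun i x => √(v i : ℝ) * x) (Z := fun x => √(V : ℝ) * x)
    (fun _ => by fun_prop) (by fun_prop) (ae_of_all _ fun x => hsqrt.mul_const x)).tendsto
  simpa only [← gaussianReal_zero_eq_map_mul] using h

lemma MeasureTheory.L2.real_inner_eq_integral_mul {α : Type*} [MeasurableSpace α]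
    {μ : Measure α} (Y W : Lp ℝ 2 μ) : inner ℝ Y W = ∫ ω, Y ω * W ω ∂μ := by
  rw [L2.inner_def]
  simp [mul_comm]

lemma MeasureTheory.L2.integral_sq_eq_norm_sq {α : Type*} [MeasurableSpace α]
    {μ : Measure α} (Y : Lp ℝ 2 μ) : ∫ ω, Y ω ^ 2 ∂μ = ‖Y‖ ^ 2 := by
  simp_rw [← real_inner_self_eq_norm_sq, real_inner_eq_integral_mul, sq]

lemma MeasureTheory.integral_mem_of_ae_mem {α E : Type*} [MeasurableSpace α] {μ : Measure α}
    [NormedAddCommGroup E] [NormedSpace ℝ E] [CompleteSpace E] {S : Submodule ℝ E}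
    (hS : IsClosed (S : Set E)) {f : α → E} (hf : Integrable f μ) (hfS : ∀ᵐ x ∂μ, f x ∈ S) :
    ∫ x, f x ∂μ ∈ S := by
  have : IsClosed (S : Set E) := hS -- the instance making `E ⧸ S` a normed group
  rw [← Submodule.Quotient.mk_eq_zero]
  change S.mkQL _ = 0
  rw [← S.mkQL.integral_comp_comm hf]
  refine (integral_congr_ae ?_).trans (integral_zero _ _)
  filter_upwards [hfS] with x hx
  simpa [Submodule.mkQL_apply] using hx

section CenteredGaussianL2

variable {Ω : Type*} [MeasurableSpace Ω] {P : Measure Ω}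

def centeredGaussianL2 (P : Measure Ω) : Set (Lp ℝ 2 P) :=
  {Y | ∃ v : ℝ≥0, P.map Y = gaussianReal 0 v}

lemma nnnorm_sq_eq_of_map_eq_gaussianReal {Y : Lp ℝ 2 P} {v : ℝ≥0}
    (h : P.map Y = gaussianReal 0 v) : v = ‖Y‖₊ ^ 2 := by
  rw [← NNReal.coe_inj, NNReal.coe_pow, coe_nnnorm, ← integral_sq_gaussianReal_zero v, ← h,
    integral_map (Lp.aestronglyMeasurable Y).aemeasurable (by fun_prop),
    L2.integral_sq_eq_norm_sq]

lemma isClosed_centeredGaussianL2 [IsProbabilityMeasure P] :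
    IsClosed (centeredGaussianL2 P) := by
  refine IsSeqClosed.isClosed fun u Y hu hlim => ⟨‖Y‖₊ ^ 2, ?_⟩
  choose v hv using hu
  have hvY : Tendsto v atTop (𝓝 (‖Y‖₊ ^ 2)) :=
    (((continuous_nnnorm.tendsto Y).comp hlim).pow 2).congr fun n =>
      (nnnorm_sq_eq_of_map_eq_gaussianReal (hv n)).symm
  have hlaw := ((tendstoInMeasure_of_tendsto_Lp hlim).tendstoInDistribution
    fun n => (Lp.aestronglyMeasurable (u n)).aemeasurable).tendsto
  have hlaw' := hlaw.congr fun n =>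
    (Subtype.ext (hv n) : _ = (⟨gaussianReal 0 (v n), inferInstance⟩ : ProbabilityMeasure ℝ))
  exact congrArg Subtype.val
    (tendsto_nhds_unique (X := ProbabilityMeasure ℝ) hlaw' (tendsto_gaussianReal_zero hvY))

lemma map_sum_smul_eq_map_sum_mul {n : ℕ} (c : Fin n → ℝ) (G : Fin n → Lp ℝ 2 P) :
    P.map ⇑(∑ i, c i • G i) = P.map (fun ω => ∑ i, c i * G i ω) := by
  refine Measure.map_congr ?_
  filter_upwards [Lp.coeFn_fun_finsetSum Finset.univ fun i => c i • G i,
    ae_all_iff.mpr fun i => Lp.coeFn_smul (c i) (G i)] with ω hsum hsmul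
  rw [hsum]
  simp only [hsmul, Pi.smul_apply, smul_eq_mul]

lemma isCenteredGaussianProcess_iff_span_subset {T : Type*} (F : T → Lp ℝ 2 P) :
    IsCenteredGaussianProcess P (fun t => ⇑(F t)) ↔
      (Submodule.span ℝ (Set.range F) : Set (Lp ℝ 2 P)) ⊆ centeredGaussianL2 P := by
  constructor
  · intro hF Y hY
    obtain ⟨n, c, w, rfl⟩ := Submodule.mem_span_set'.mp hY
    choose t ht using fun i => (w i).2
    obtain ⟨v, hv⟩ := hF n t c
    refine ⟨v, ?_⟩
    rw [map_sum_smul_eq_map_sum_mul, ← hv]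
    simp_rw [ht]
  · intro hF n t c
    rw [← map_sum_smul_eq_map_sum_mul]
    exact hF (Submodule.sum_mem _ fun i _ =>
      Submodule.smul_mem _ _ (Submodule.subset_span ⟨t i, rfl⟩))

lemma IsCenteredGaussianProcess.of_mem_topologicalClosure_span [IsProbabilityMeasure P]
    {X T : Type*} {f : X → Lp ℝ 2 P} (hf : IsCenteredGaussianProcess P fun x => ⇑(f x))
    {F : T → Lp ℝ 2 P} (hF : ∀ t, F t ∈ (Submodule.span ℝ (Set.range f)).topologicalClosure) :
    IsCenteredGaussianProcess P fun t => ⇑(F t) := by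
  rw [isCenteredGaussianProcess_iff_span_subset] at hf ⊢
  have hclosure : ((Submodule.span ℝ (Set.range f)).topologicalClosure : Set (Lp ℝ 2 P)) ⊆
      centeredGaussianL2 P := by
    rw [Submodule.topologicalClosure_coe]
    exact closure_minimal hf isClosed_centeredGaussianL2
  exact (SetLike.coe_subset_coe.mpr
    (Submodule.span_le.mpr (Set.range_subset_iff.mpr hF))).trans hclosure

end CenteredGaussianL2

theorem joint_gaussian_f_and_conditional_mean_process_IV_general
    {Ω : Type*} [MeasurableSpace Ω] (P : Measure Ω) [IsProbabilityMeasure P]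
    {X : Type*} [MeasurableSpace X] {Z : Type*}
    (f : X → Lp ℝ 2 P)
    (hGP : IsCenteredGaussianProcess P (fun x => ⇑(f x)))
    (k : X → X → ℝ) (hk : ∀ x x', k x x' = ∫ ω, f x ω * f x' ω ∂P)
    (ν : Z → Measure X)
    (hint : ∀ z, Integrable f (ν z))
    (g : Z → Lp ℝ 2 P) (hg : ∀ z, g z = ∫ x, f x ∂(ν z)) :
    IsCenteredGaussianProcess P (Sum.elim (fun x => ⇑(f x)) (fun z => ⇑(g z))) ∧
    ∀ x z, (∫ ω, f x ω * g z ω ∂P) = ∫ x', k x x' ∂(ν z) := by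
  have hf_mem : ∀ x, f x ∈ (Submodule.span ℝ (Set.range f)).topologicalClosure := fun x =>
    Submodule.le_topologicalClosure _ (Submodule.subset_span ⟨x, rfl⟩)
  have hg_mem : ∀ z, g z ∈ (Submodule.span ℝ (Set.range f)).topologicalClosure := fun z =>
    hg z ▸ integral_mem_of_ae_mem (Submodule.isClosed_topologicalClosure _) (hint z)
      (ae_of_all _ hf_mem)
  refine ⟨?_, fun x z => ?_⟩
  · have hjoint := hGP.of_mem_topologicalClosure_span (F := Sum.elim f g)
      (Sum.forall.mpr ⟨hf_mem, hg_mem⟩)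
    convert hjoint using 1
    ext (x | z) <;> rfl
  · simp_rw [hk, ← L2.real_inner_eq_integral_mul, hg z, integral_inner (hint z)]

/-- Joint Gaussianity of a centered Gaussian process and its conditional mean process
(the GPIV joint model). If `(f_x)` is a centered Gaussian process with covariance
`k(x, x′) = E[f_x f_{x′}]` and `g_z = ∫ f_x dν_z(x)`, then the combined process on the
disjoint union `X ⊔ Z`, equal to `f` on `X` and `g` on `Z`, is a centered Gaussian
process, with cross-covariance `E[f_x g_z] = ∫ k(x, x′) dν_z(x′)`. -/
theorem joint_gaussian_f_and_conditional_mean_process_IV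
    {Ω : Type*} [MeasurableSpace Ω] (P : Measure Ω) [IsProbabilityMeasure P]
    {X : Type*} [MeasurableSpace X] {Z : Type*}
    (f : X → Lp ℝ 2 P) (hmeas : StronglyMeasurable f)
    (hGP : IsCenteredGaussianProcess P (fun x => ⇑(f x)))
    (k : X → X → ℝ) (hk : ∀ x x', k x x' = ∫ ω, f x ω * f x' ω ∂P)
    (ν : Z → Measure X) (hfin : ∀ z, IsFiniteMeasure (ν z))
    (hint : ∀ z, Integrable f (ν z))
    (g : Z → Lp ℝ 2 P) (hg : ∀ z, g z = ∫ x, f x ∂(ν z)) :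
    IsCenteredGaussianProcess P (Sum.elim (fun x => ⇑(f x)) (fun z => ⇑(g z))) ∧
    ∀ x z, (∫ ω, f x ω * g z ω ∂P) = ∫ x', k x x' ∂(ν z) :=
  joint_gaussian_f_and_conditional_mean_process_IV_general P f hGP k hk ν hint g hg
end

section
/- Let (Ω, 𝔉, P) be a probability space, let X and W be measurable spaces, and let (h_{(x,w)})_{(x,w)∈X×W} be a centered Gaussian process on Ω with product covariance function E[h_{(x,w)}·h_{(x′,w′)}] = k_X(x, x′)·k_W(w, w′), with each h_{(x,w)} ∈ L²(Ω, P) and, for each x, w ↦ h_{(x,w)} ∈ L²(Ω, P) strongly measurable. Let P_W be a probability measure on W and (ν_{x,z}) a family of finite measures on W, with respect to each of which w ↦ h_{(x,w)} is Bochner integrable in L²(Ω, P). Set f_{x′} = ∫ h_{(x′,w′)} dP_W(w′) and g_{(x,z)} = ∫ h_{(x,w)} dν_{x,z}(w) (Bochner integrals in L²(Ω, P)). Then the combined process (f, g), indexed by the disjoint union X ⊔ (X × Z), is a centered Gaussian process, and its cross-covariance satisfies E[f_{x′}·g_{(x,z)}] = k_X(x, x′) · ∬ k_W(w′, w) dP_W(w′)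 dν_{x,z}(w). -/
/-!
Inside `L²(P)`, the centered Gaussian variables form a closed set: a limit in `L²` is a limit in
distribution, the variances converge as squared norms, and Lévy's theorem identifies the limit
law through its characteristic function. The finite linear combinations of the `h_{(x,w)}` are
centered Gaussian, so every element of the closed linear span of the process is. Bochner
integrals of span-valued maps stay in that closed span (they are orthogonal to its orthogonal
complement), so all linear combinations of the `f_{x'}` and `g_{(x,z)}` are centered Gaussian.
The covariance is an inner product in `L²(P)`, which commutes with both Bochner integrals.
-/

open MeasureTheory ProbabilityTheory

open Filter Topology
open scoped NNReal RealInnerProductSpace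

theorem Submodule.integral_mem_topologicalClosure {E β : Type*} [NormedAddCommGroup E]
    [InnerProductSpace ℝ E] [CompleteSpace E] [MeasurableSpace β] {μ : Measure β}
    {S : Submodule ℝ E} {u : β → E} (hu : Integrable u μ) (hS : ∀ b, u b ∈ S) :
    ∫ b, u b ∂μ ∈ S.topologicalClosure := by
  rw [← Submodule.orthogonal_orthogonal_eq_closure, Submodule.mem_orthogonal]
  intro z hz
  rw [← integral_inner hu z]
  simp [Submodule.inner_left_of_mem_orthogonal (hS _) hz]

section HilbertProcess

variable {E X W : Type*} [NormedAddCommGroup E] [InnerProductSpace ℝ E]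

def HasProductCovariance (h : X × W → E) (kX : X → X → ℝ) (kW : W → W → ℝ) : Prop :=
  ∀ x x' w w', ⟪h (x, w), h (x', w')⟫ = kX x x' * kW w w'

variable {h : X × W → E} {kX : X → X → ℝ} {kW : W → W → ℝ}

theorem HasProductCovariance.inner_eq_swap (hk : HasProductCovariance h kX kW)
    (x x' : X) (w w' : W) : ⟪h (x', w'), h (x, w)⟫ = kX x x' * kW w' w := by
  by_cases hsymm : kX x' x = kX x x'
  · rw [hk, hsymm]
  -- `kX` is not symmetric, so symmetry of the inner product forces `h = 0`.
  have hdiag (u : W) : kW u u = 0 := by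
    by_contra hne
    have hcomm := real_inner_comm (h (x, u)) (h (x', u))
    rw [hk, hk] at hcomm
    exact hsymm (mul_right_cancel₀ hne hcomm)
  have hzero (p : X × W) : h p = 0 := by
    rw [← inner_self_eq_zero (𝕜 := ℝ), hk, hdiag, mul_zero]
  rw [← hk]
  simp [hzero]

theorem HasProductCovariance.inner_integral_integral [CompleteSpace E]
    (hk : HasProductCovariance h kX kW) [MeasurableSpace W] {μ ν : Measure W} {x x' : X}
    (hμ : Integrable (fun w' => h (x', w')) μ) (hν : Integrable (fun w => h (x, w)) ν) :
    ⟪∫ w', h (x', w') ∂μ, ∫ w, h (x, w) ∂ν⟫ = kX x x' * ∫ w, ∫ w', kW w' w ∂μ ∂ν := by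
  calc ⟪∫ w', h (x', w') ∂μ, ∫ w, h (x, w) ∂ν⟫
      = ∫ w, ⟪∫ w', h (x', w') ∂μ, h (x, w)⟫ ∂ν := (integral_inner hν _).symm
    _ = ∫ w, ∫ w', kX x x' * kW w' w ∂μ ∂ν := by
      refine integral_congr_ae (ae_of_all _ fun w => ?_)
      dsimp only
      rw [real_inner_comm, ← integral_inner hμ]
      exact integral_congr_ae (ae_of_all _ fun w' =>
        (real_inner_comm _ _).trans (hk.inner_eq_swap x x' w w'))
    _ = kX x x' * ∫ w, ∫ w', kW w' w ∂μ ∂ν := by simp_rw [integral_const_mul]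

end HilbertProcess

section L2Gaussian

variable {Ω : Type*} [MeasurableSpace Ω] {P : Measure Ω}

theorem MeasureTheory.L2.real_inner_eq_integral (u v : Lp ℝ 2 P) :
    ⟪u, v⟫ = ∫ ω, u ω * v ω ∂P := by
  simp [L2.inner_def, mul_comm]

theorem MeasureTheory.Lp.coeFn_sum_smul {E 𝕜 ι : Type*} [NormedAddCommGroup E] [NormedRing 𝕜]
    [Module 𝕜 E] [IsBoundedSMul 𝕜 E] {p : ENNReal} [Fintype ι] (c : ι → 𝕜) (u : ι → Lp E p P) :
    ⇑(∑ i, c i • u i) =ᵐ[P] fun ω => ∑ i, c i • u i ω := by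
  filter_upwards [Lp.coeFn_fun_finsetSum Finset.univ (fun i => c i • u i),
    ae_all_iff.2 fun i => Lp.coeFn_smul (c i) (u i)] with ω hsum hsmul
  rw [hsum]
  exact Finset.sum_congr rfl fun i _ => hsmul i

theorem isCenteredGaussianProcess_iff_forall_mem_span {T : Type*} (F : T → Lp ℝ 2 P) :
    IsCenteredGaussianProcess P (fun t => ⇑(F t)) ↔
      ∀ Y ∈ Submodule.span ℝ (Set.range F), ∃ v : ℝ≥0, P.map ⇑Y = gaussianReal 0 v := by
  have hmap (n : ℕ) (t : Fin n → T) (c : Fin n → ℝ) :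
      P.map ⇑(∑ i, c i • F (t i)) = P.map fun ω => ∑ i, c i * F (t i) ω :=
    Measure.map_congr (Lp.coeFn_sum_smul c fun i => F (t i))
  constructor
  · intro hGP Y hY
    obtain ⟨n, c, G, rfl⟩ := Submodule.mem_span_set'.mp hY
    choose t ht using fun i => (G i).2
    simp_rw [← ht, hmap]
    exact hGP n t c
  · intro hspan n t c
    rw [← hmap]
    exact hspan _ (Submodule.sum_mem _ fun i _ =>
      Submodule.smul_mem _ _ (Submodule.subset_span ⟨t i, rfl⟩))

theorem eq_nnnorm_sq_of_map_eq_gaussianReal {Y : Lp ℝ 2 P} {v : ℝ≥0}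
    (hY : P.map Y = gaussianReal 0 v) : v = ‖Y‖₊ ^ 2 := by
  have hm := (Lp.aestronglyMeasurable Y).aemeasurable
  have hmean : ∫ ω, Y ω ∂P = 0 := by
    rw [← integral_id_gaussianReal (μ := 0) (v := v), ← hY,
      integral_map (f := fun x => x) hm continuous_id'.aestronglyMeasurable]
  refine NNReal.eq ?_
  calc (v : ℝ) = Var[id; gaussianReal 0 v] := variance_id_gaussianReal.symm
    _ = ∫ ω, Y ω ^ 2 ∂P := by rw [← hY, variance_id_map hm, variance_of_integral_eq_zero hm hmean]
    _ = ‖Y‖₊ ^ 2 := by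
      rw [coe_nnnorm, ← real_inner_self_eq_norm_sq, L2.real_inner_eq_integral]
      simp only [sq]

theorem isClosed_setOf_map_eq_gaussianReal [IsProbabilityMeasure P] :
    IsClosed {Y : Lp ℝ 2 P | ∃ v : ℝ≥0, P.map Y = gaussianReal 0 v} := by
  refine IsSeqClosed.isClosed fun Y Ylim hY hlim => ⟨‖Ylim‖₊ ^ 2, ?_⟩
  choose v hv using hY
  have hv_tendsto : Tendsto v atTop (𝓝 (‖Ylim‖₊ ^ 2)) := by
    rw [funext fun n => eq_nnnorm_sq_of_map_eq_gaussianReal (hv n)]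
    exact ((continuous_nnnorm.tendsto _).comp hlim).pow 2
  have hdist : TendstoInDistribution (fun n => ⇑(Y n)) atTop Ylim (fun _ => P) P :=
    (tendstoInMeasure_of_tendsto_Lp hlim).tendstoInDistribution
      fun n => (Lp.aestronglyMeasurable _).aemeasurable
  have hchar := ProbabilityMeasure.tendsto_iff_tendsto_charFun.mp hdist.tendsto
  have hcont (t : ℝ) : Continuous fun v : ℝ≥0 => charFun (gaussianReal 0 v) t := by
    simp_rw [charFun_gaussianReal]
    fun_prop
  have : IsProbabilityMeasure (P.map Ylim) :=
    Measure.isProbabilityMeasure_map (Lp.aestronglyMeasurable Ylim).aemeasurable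
  refine Measure.ext_of_charFun (funext fun t => tendsto_nhds_unique (hchar t) ?_)
  simpa only [ProbabilityMeasure.coe_mk, hv, Function.comp_def] using
    (hcont t).tendsto _ |>.comp hv_tendsto

theorem IsCenteredGaussianProcess.of_forall_mem_topologicalClosure [IsProbabilityMeasure P]
    {T T' : Type*} {h : T → Lp ℝ 2 P} (hGP : IsCenteredGaussianProcess P fun t => ⇑(h t))
    {F : T' → Lp ℝ 2 P} (hF : ∀ s, F s ∈ (Submodule.span ℝ (Set.range h)).topologicalClosure) :
    IsCenteredGaussianProcess P fun s => ⇑(F s) := by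
  rw [isCenteredGaussianProcess_iff_forall_mem_span] at hGP ⊢
  intro Y hY
  have hclosure : Y ∈ closure (Submodule.span ℝ (Set.range h) : Set (Lp ℝ 2 P)) := by
    rw [← Submodule.topologicalClosure_coe]
    exact Submodule.span_le.2 (Set.range_subset_iff.2 hF) hY
  exact closure_minimal hGP isClosed_setOf_map_eq_gaussianReal hclosure

end L2Gaussian

theorem joint_gaussian_f_and_g_proxy_general
    {Ω : Type*} [MeasurableSpace Ω] (P : Measure Ω) [IsProbabilityMeasure P]
    {X W Z : Type*} [MeasurableSpace W]
    (h : X × W → Lp ℝ 2 P)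
    (hGP : IsCenteredGaussianProcess P (fun p => ⇑(h p)))
    (kX : X → X → ℝ) (kW : W → W → ℝ)
    (hcov : ∀ x x' w w', (∫ ω, h (x, w) ω * h (x', w') ω ∂P) = kX x x' * kW w w')
    (PW : Measure W)
    (hintPW : ∀ x, Integrable (fun w => h (x, w)) PW)
    (ν : X × Z → Measure W)
    (hint : ∀ x z, Integrable (fun w => h (x, w)) (ν (x, z)))
    (f : X → Lp ℝ 2 P) (hf : ∀ x', f x' = ∫ w', h (x', w') ∂PW)
    (g : X × Z → Lp ℝ 2 P) (hg : ∀ x z, g (x, z) = ∫ w, h (x, w) ∂(ν (x, z))) :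
    IsCenteredGaussianProcess P (Sum.elim (fun x => ⇑(f x)) (fun p => ⇑(g p))) ∧
    ∀ x' x z, (∫ ω, f x' ω * g (x, z) ω ∂P)
      = kX x x' * ∫ w, (∫ w', kW w' w ∂PW) ∂(ν (x, z)) := by
  have hk : HasProductCovariance h kX kW := fun x x' w w' => by
    rw [L2.real_inner_eq_integral, hcov]
  have hmem (s : X ⊕ X × Z) :
      Sum.elim f g s ∈ (Submodule.span ℝ (Set.range h)).topologicalClosure := by
    rcases s with x' | ⟨x, z⟩
    · rw [Sum.elim_inl, hf x']
      exact Submodule.integral_mem_topologicalClosure (hintPW x')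
        fun w => Submodule.subset_span ⟨_, rfl⟩
    · rw [Sum.elim_inr, hg x z]
      exact Submodule.integral_mem_topologicalClosure (hint x z)
        fun w => Submodule.subset_span ⟨_, rfl⟩
  have hcoe : Sum.elim (fun x => ⇑(f x)) (fun p => ⇑(g p)) = fun s => ⇑(Sum.elim f g s) := by
    funext s
    cases s <;> rfl
  refine ⟨hcoe ▸ hGP.of_forall_mem_topologicalClosure hmem, fun x' x z => ?_⟩
  rw [← L2.real_inner_eq_integral, hf, hg]
  exact hk.inner_integral_integral (hintPW x') (hint x z)

/-- Joint Gaussianity underlying the GPProxy construction. If `(h_{(x,w)})` is a centered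
Gaussian process with product covariance `E[h_{(x,w)} h_{(x′,w′)}] = k_X(x,x′)·k_W(w,w′)`,
`f_{x′} = ∫ h_{(x′,w′)} dP_W(w′)` and `g_{(x,z)} = ∫ h_{(x,w)} dν_{x,z}(w)`, then the
combined process `(f, g)` indexed by `X ⊔ (X × Z)` is a centered Gaussian process with
cross-covariance `E[f_{x′} g_{(x,z)}] = k_X(x,x′) · ∬ k_W(w′,w) dP_W(w′) dν_{x,z}(w)`. -/
theorem joint_gaussian_f_and_g_proxy
    {Ω : Type*} [MeasurableSpace Ω] (P : Measure Ω) [IsProbabilityMeasure P]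
    {X W Z : Type*} [MeasurableSpace X] [MeasurableSpace W]
    (h : X × W → Lp ℝ 2 P)
    (hmeas : ∀ x, StronglyMeasurable (fun w => h (x, w)))
    (hGP : IsCenteredGaussianProcess P (fun p => ⇑(h p)))
    (kX : X → X → ℝ) (kW : W → W → ℝ)
    (hcov : ∀ x x' w w', (∫ ω, h (x, w) ω * h (x', w') ω ∂P) = kX x x' * kW w w')
    (PW : Measure W) [IsProbabilityMeasure PW]
    (hintPW : ∀ x, Integrable (fun w => h (x, w)) PW)
    (ν : X × Z → Measure W) (hfin : ∀ p, IsFiniteMeasure (ν p))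
    (hint : ∀ x z, Integrable (fun w => h (x, w)) (ν (x, z)))
    (f : X → Lp ℝ 2 P) (hf : ∀ x', f x' = ∫ w', h (x', w') ∂PW)
    (g : X × Z → Lp ℝ 2 P) (hg : ∀ x z, g (x, z) = ∫ w, h (x, w) ∂(ν (x, z))) :
    IsCenteredGaussianProcess P (Sum.elim (fun x => ⇑(f x)) (fun p => ⇑(g p))) ∧
    ∀ x' x z, (∫ ω, f x' ω * g (x, z) ω ∂P)
      = kX x x' * ∫ w, (∫ w', kW w' w ∂PW) ∂(ν (x, z)) :=
  joint_gaussian_f_and_g_proxy_general P h hGP kX kW hcov PW hintPW ν hint f hf g hg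
end
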